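/- arXiv:math/0202294 — 2 statements merged into one kernel-verified Lean document; each statement's English description precedes it below -/
import Mathlib

section
/- The Fano matroid is representable over a field k only if k has characteristic 2. -/
/-- The 3-element circuits of the Fano matroid on `{0, ..., 6}`
(the sets `{3,5,6}, {2,5,7}, {1,6,7}, {3,4,7}, {2,4,6}, {1,4,5}, {1,2,3}` shifted to
0-indexing). -/
def fanoCircuits : Set (Set (Fin 7)) :=
  {{2,4,5}, {1,4,6}, {0,5,6}, {2,3,6}, {1,3,5}, {0,3,4}, {0,1,2}}

/-- Independence in the Fano matroid: sets of cardinality at most `3` containing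
none of the seven `3`-element circuits. -/
def fanoIndep (X : Set (Fin 7)) : Prop :=
  X.ncard ≤ 3 ∧ ∀ C ∈ fanoCircuits, ¬C ⊆ X


/-!
The points `φ 0, φ 1, φ 3, φ 6` form a quadrangle in general position, and `φ 2, φ 4, φ 5` are
its diagonal points, where the opposite sides `{0,1},{3,6}`, `{0,3},{1,6}` and `{1,3},{0,6}`
meet. Writing `φ 6 = α φ 0 + β φ 1 + γ φ 3`, the diagonal points are multiples of
`α φ 0 + β φ 1`, `α φ 0 + γ φ 3` and `β φ 1 + γ φ 3`. The line `{2,4,5}` makes them collinear,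
and comparing coordinates in the basis `φ 0, φ 1, φ 3` then gives `2 = 0`.
-/

open Submodule

theorem linearIndepOn_triple_iff {R M ι : Type*} [Semiring R] [AddCommMonoid M] [Module R M]
    {v : ι → M} {i j l : ι} (hij : i ≠ j) (hil : i ≠ l) (hjl : j ≠ l) :
    LinearIndepOn R v {i, j, l} ↔ LinearIndependent R ![v i, v j, v l] := by
  have hinj : Function.Injective ![i, j, l] := by
    intro a b
    fin_cases a <;> fin_cases b <;> simp [hij, hil, hjl, hij.symm, hil.symm, hjl.symm]
  have hrange : Set.range ![i, j, l] = {i, j, l} := by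
    simp only [Matrix.range_cons, Matrix.range_empty, Set.union_empty, Set.singleton_union]
  have hcomp : v ∘ ![i, j, l] = ![v i, v j, v l] := by
    funext a
    fin_cases a <;> rfl
  rw [← hrange, linearIndepOn_range_iff hinj, hcomp]

section Plane

variable {k V : Type*} [Field k] [AddCommGroup V] [Module k V]

theorem LinearIndependent.eq_zero_of_triple {a b c : V} (h : LinearIndependent k ![a, b, c])
    {x y z : k} (hs : x • a + y • b + z • c = 0) : x = 0 ∧ y = 0 ∧ z = 0 := by
  have := Fintype.linearIndependent_iff.1 h ![x, y, z] (by simpa [Fin.sum_univ_three] using hs)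
  exact ⟨this 0, this 1, this 2⟩

theorem mem_span_singleton_of_mem_inf_span_pair {W : Submodule k V} {c d e p : V}
    (hc : c ∉ W) (he : e ∈ W) (hde : d - e ∈ k ∙ c) (hp : p ∈ W ⊓ span k {c, d}) :
    p ∈ k ∙ e := by
  obtain ⟨hpW, hpcd⟩ := hp
  obtain ⟨s, t, rfl⟩ := mem_span_pair.1 hpcd
  obtain ⟨γ, hγ⟩ := mem_span_singleton.1 hde
  obtain rfl : d = e + γ • c := eq_add_of_sub_eq' hγ.symm
  have hmem : (s + t * γ) • c ∈ W := by
    convert W.sub_mem hpW (W.smul_mem t he) using 1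
    module
  have hcoeff : s + t * γ = 0 := by
    by_contra h
    exact hc ((W.smul_mem_iff h).1 hmem)
  refine mem_span_singleton.2 ⟨t, ?_⟩
  rw [eq_neg_of_add_eq_zero_left hcoeff]
  module

theorem two_eq_zero_of_smul_mem_span_pair {a b c : V} (habc : LinearIndependent k ![a, b, c])
    {α β γ t s ρ : k} (hα : α ≠ 0) (hβ : β ≠ 0) (hγ : γ ≠ 0) (ht : t ≠ 0)
    (h : t • (α • a + β • b) ∈ span k {s • (α • a + γ • c), ρ • (β • b + γ • c)}) :
    (2 : k) = 0 := by
  obtain ⟨u, v, huv⟩ := mem_span_pair.1 h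
  obtain ⟨h₁, h₂, h₃⟩ := habc.eq_zero_of_triple (x := (u * s - t) * α) (y := (v * ρ - t) * β)
    (z := (u * s + v * ρ) * γ) (by rw [← sub_eq_zero.2 huv]; module)
  have h2t : 2 * t = 0 := by
    linear_combination (mul_eq_zero.1 h₃).resolve_right hγ - (mul_eq_zero.1 h₁).resolve_right hα
      - (mul_eq_zero.1 h₂).resolve_right hβ
  exact (mul_eq_zero.1 h2t).resolve_right ht

theorem two_eq_zero_of_diagonal_points_collinear {a b c d p q r : V}
    (habc : LinearIndependent k ![a, b, c]) (hd : d ∈ span k {a, b, c})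
    (hbcd : d ∉ span k {b, c}) (hacd : d ∉ span k {a, c}) (habd : d ∉ span k {a, b})
    (hp : p ∈ span k {a, b} ⊓ span k {c, d}) (hq : q ∈ span k {a, c} ⊓ span k {b, d})
    (hr : r ∈ span k {b, c} ⊓ span k {a, d}) (hp0 : p ≠ 0) (hpqr : p ∈ span k {q, r}) :
    (2 : k) = 0 := by
  obtain ⟨α, β, γ, rfl⟩ := mem_span_triple.1 hd
  have hα : α ≠ 0 := by
    rintro rfl
    exact hbcd (mem_span_pair.2 ⟨β, γ, by simp⟩)
  have hβ : β ≠ 0 := by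
    rintro rfl
    exact hacd (mem_span_pair.2 ⟨α, γ, by simp⟩)
  have hγ : γ ≠ 0 := by
    rintro rfl
    exact habd (mem_span_pair.2 ⟨α, β, by simp⟩)
  have hc : c ∉ span k {a, b} := by
    simpa [Set.image_insert_eq] using habc.notMem_span_image (s := {0, 1}) (x := 2) (by decide)
  have hb : b ∉ span k {a, c} := by
    simpa [Set.image_insert_eq] using habc.notMem_span_image (s := {0, 2}) (x := 1) (by decide)
  have ha : a ∉ span k {b, c} := by
    simpa [Set.image_insert_eq] using habc.notMem_span_image (s := {1, 2}) (x := 0) (by decide)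
  obtain ⟨t, rfl⟩ := mem_span_singleton.1 <| mem_span_singleton_of_mem_inf_span_pair hc
    (mem_span_pair.2 ⟨α, β, rfl⟩) (mem_span_singleton.2 ⟨γ, by abel⟩) hp
  obtain ⟨s, rfl⟩ := mem_span_singleton.1 <| mem_span_singleton_of_mem_inf_span_pair hb
    (mem_span_pair.2 ⟨α, γ, rfl⟩) (mem_span_singleton.2 ⟨β, by abel⟩) hq
  obtain ⟨ρ, rfl⟩ := mem_span_singleton.1 <| mem_span_singleton_of_mem_inf_span_pair ha
    (mem_span_pair.2 ⟨β, γ, rfl⟩) (mem_span_singleton.2 ⟨α, by abel⟩) hr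
  refine two_eq_zero_of_smul_mem_span_pair habc hα hβ hγ ?_ hpqr
  rintro rfl
  exact hp0 (zero_smul k _)

end Plane

theorem ncard_eq_three_of_mem_fanoCircuits {C : Set (Fin 7)} (hC : C ∈ fanoCircuits) :
    C.ncard = 3 := by
  simp only [fanoCircuits, Set.mem_insert_iff, Set.mem_singleton_iff] at hC
  rcases hC with rfl | rfl | rfl | rfl | rfl | rfl | rfl <;> simp [Set.ncard_insert_of_notMem]

theorem fanoIndep_pair (i j : Fin 7) : fanoIndep {i, j} := by
  have hpair : ({i, j} : Set (Fin 7)).ncard ≤ 2 := by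
    simpa using Set.ncard_insert_le i {j}
  refine ⟨hpair.trans (by norm_num), fun C hC hCX => ?_⟩
  have := Set.ncard_le_ncard hCX
  rw [ncard_eq_three_of_mem_fanoCircuits hC] at this
  omega

theorem fanoIndep_triple_iff {i j l : Fin 7} :
    fanoIndep {i, j, l} ↔ ∀ C ∈ fanoCircuits, ¬C ⊆ {i, j, l} := by
  refine and_iff_right ((Set.ncard_insert_le i {j, l}).trans (Nat.succ_le_succ ?_))
  simpa using Set.ncard_insert_le j {l}

section Representation

variable {k V : Type*} [Field k] [AddCommGroup V] [Module k V] {φ : Fin 7 → V}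

theorem mem_span_image_of_not_fanoIndep_insert (hrep : ∀ X, fanoIndep X ↔ LinearIndepOn k φ X)
    {s : Set (Fin 7)} {i : Fin 7} (hs : fanoIndep s) (h : ¬ fanoIndep (insert i s)) :
    φ i ∈ span k (φ '' s) := by
  rw [hrep, linearIndepOn_insert_iff, not_and, Classical.not_imp] at h
  exact (h ((hrep s).1 hs)).1

theorem mem_span_pair_of_not_fanoIndep (hrep : ∀ X, fanoIndep X ↔ LinearIndepOn k φ X)
    {i j l : Fin 7} (h : ¬ fanoIndep {i, j, l}) : φ i ∈ span k {φ j, φ l} := by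
  simpa [Set.image_pair] using mem_span_image_of_not_fanoIndep_insert hrep (fanoIndep_pair j l) h

theorem notMem_span_pair_of_fanoIndep (hrep : ∀ X, fanoIndep X ↔ LinearIndepOn k φ X)
    {i j l : Fin 7} (h : fanoIndep {i, j, l}) (hij : i ≠ j) (hil : i ≠ l) :
    φ i ∉ span k {φ j, φ l} := by
  have hi : i ∉ ({j, l} : Set (Fin 7)) := by simp [hij, hil]
  simpa [Set.image_pair] using ((linearIndepOn_insert hi).1 ((hrep _).1 h)).2

end Representation

/-- The Fano matroid is representable over a field `k` only if `k` has characteristic 2. -/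
theorem fano_representable_only_char_two
    {k : Type*} [Field k] {m : ℕ} (φ : Fin 7 → (Fin m → k))
    (hrep : ∀ X : Set (Fin 7), fanoIndep X ↔ LinearIndependent k (fun x : X => φ x)) :
    CharP k 2 := by
  have h013 : fanoIndep {0, 1, 3} :=
    fanoIndep_triple_iff.2 (by simp [fanoCircuits, Set.insert_subset_iff])
  have hbasis : LinearIndependent k ![φ 0, φ 1, φ 3] :=
    (linearIndepOn_triple_iff (by decide) (by decide) (by decide)).1 ((hrep _).1 h013)
  have h6 : φ 6 ∈ span k {φ 0, φ 1, φ 3} := by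
    simpa [Set.image_insert_eq] using mem_span_image_of_not_fanoIndep_insert hrep (i := 6) h013
      fun h => by simpa [Set.ncard_insert_of_notMem] using h.1
  have offLine : ∀ {j l : Fin 7}, (∀ C ∈ fanoCircuits, ¬C ⊆ {6, j, l}) → 6 ≠ j → 6 ≠ l →
      φ 6 ∉ span k {φ j, φ l} :=
    fun h => notMem_span_pair_of_fanoIndep hrep (fanoIndep_triple_iff.2 h)
  have onLine : ∀ {i j l : Fin 7}, (∃ C ∈ fanoCircuits, C ⊆ {i, j, l}) →
      φ i ∈ span k {φ j, φ l} :=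
    fun ⟨C, hC, hCX⟩ => mem_span_pair_of_not_fanoIndep hrep fun h => h.2 C hC hCX
  have hp : φ 2 ∈ span k {φ 0, φ 1} ⊓ span k {φ 3, φ 6} :=
    ⟨onLine (by simp [fanoCircuits, Set.insert_subset_iff]),
      onLine (by simp [fanoCircuits, Set.insert_subset_iff])⟩
  have hq : φ 4 ∈ span k {φ 0, φ 3} ⊓ span k {φ 1, φ 6} :=
    ⟨onLine (by simp [fanoCircuits, Set.insert_subset_iff]),
      onLine (by simp [fanoCircuits, Set.insert_subset_iff])⟩
  have hr : φ 5 ∈ span k {φ 1, φ 3} ⊓ span k {φ 0, φ 6} :=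
    ⟨onLine (by simp [fanoCircuits, Set.insert_subset_iff]),
      onLine (by simp [fanoCircuits, Set.insert_subset_iff])⟩
  have hpqr : φ 2 ∈ span k {φ 4, φ 5} := onLine (by simp [fanoCircuits, Set.insert_subset_iff])
  have hp0 : φ 2 ≠ 0 :=
    LinearIndepOn.ne_zero ((hrep {2, 4}).1 (fanoIndep_pair 2 4)) (Set.mem_insert 2 {4})
  refine (CharP.charP_iff_prime_eq_zero Nat.prime_two).2 ?_
  exact_mod_cast two_eq_zero_of_diagonal_points_collinear hbasis h6
    (offLine (by simp [fanoCircuits, Set.insert_subset_iff]) (by decide) (by decide))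
    (offLine (by simp [fanoCircuits, Set.insert_subset_iff]) (by decide) (by decide))
    (offLine (by simp [fanoCircuits, Set.insert_subset_iff]) (by decide) (by decide))
    hp hq hr hp0 hpqr
end

section
/- The matroid of rank 4 on 9 elements whose circuits of size at most 4 are {1,6,7,8}, {2,5,6,8}, {3,4,6,8}, {1,3,5,8}, {1,2,5,9}, {1,3,4,9}, {1,2,4,8}, {3,5,6,7}, {2,4,6,7}, {1,2,3,6} is not representable over any field. -/
/-- The circuits of size at most 4 of the rank-4 matroid of Example 4
(the sets `{1,6,7,8}, {2,5,6,8}, {3,4,6,8}, {1,3,5,8}, {1,2,5,9}, {1,3,4,9}, {1,2,4,8},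
{3,5,6,7}, {2,4,6,7}, {1,2,3,6}`, shifted to 0-indexing). -/
def ex4Circuits : Set (Set (Fin 9)) :=
  {{0,5,6,7}, {1,4,5,7}, {2,3,5,7}, {0,2,4,7}, {0,1,4,8},
   {0,2,3,8}, {0,1,3,7}, {2,4,5,6}, {1,3,5,6}, {0,1,2,5}}

/-- Independence in the matroid of Example 4: sets of cardinality at most `4` containing
none of the listed circuits. -/
def ex4Indep (X : Set (Fin 9)) : Prop :=
  X.ncard ≤ 4 ∧ ∀ C ∈ ex4Circuits, ¬C ⊆ X

/-!
The elements `0, 1, 2, 3` form a basis, so after a linear change of coordinates they are the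
standard basis vectors, and a 4-subset is then independent iff the determinant of its four
vectors is nonzero. Writing `x, y, z, w` for the vectors of `4, 5, 6, 7`, the circuits
`{0,1,2,5}` and `{0,1,3,7}` give `y 3 = 0` and `w 2 = 0`, and the circuits `{0,5,6,7}`,
`{0,2,4,7}`, `{2,4,5,6}`, `{1,3,5,6}` give minor relations which together force
`x 0 * y 1 * y 2 * z 3 * w 3 = 0`. But each of these five coordinates is, up to sign, the
determinant of one of the bases `{1,2,3,4}`, `{0,2,3,5}`, `{0,1,3,5}`, `{0,1,2,6}`, `{0,1,2,7}`.
-/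

open Function Set

theorem Set.ncard_le_four {α : Type*} [DecidableEq α] (a b c d : α) :
    ({a, b, c, d} : Set α).ncard ≤ 4 := by
  simpa using (ncard_coe_finset ({a, b, c, d} : Finset α)).trans_le Finset.card_le_four

theorem linearIndepOn_four_iff {R M α : Type*} [Semiring R] [AddCommMonoid M] [Module R M]
    {a b c d : α} (h : Injective ![a, b, c, d]) (v : α → M) :
    LinearIndepOn R v {a, b, c, d} ↔ LinearIndependent R ![v a, v b, v c, v d] := by
  have hrange : range ![a, b, c, d] = {a, b, c, d} := by
    simp only [Matrix.range_cons, Matrix.range_empty, union_empty, singleton_union]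
  rw [← hrange, linearIndepOn_range_iff h, ← FinVec.map_eq]
  rfl

theorem linearIndependent_iff_det_ne_zero {k ι : Type*} [Field k] [Fintype ι] [DecidableEq ι]
    (v : ι → ι → k) : LinearIndependent k v ↔ (Matrix.of v).det ≠ 0 :=
  Matrix.linearIndependent_rows_iff_isUnit.trans
    ((Matrix.isUnit_iff_isUnit_det _).trans isUnit_iff_ne_zero)

theorem exists_linearEquiv_apply_eq_single {k ι : Type*} [Field k] [Fintype ι] [DecidableEq ι]
    {v : ι → ι → k} (hv : LinearIndependent k v) :
    ∃ e : (ι → k) ≃ₗ[k] (ι → k), ∀ i, e (v i) = Pi.single i 1 := by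
  let b := basisOfLinearIndependentOfCardEqFinrank' v hv (by simp)
  refine ⟨b.equivFun, fun i => ?_⟩
  ext j
  rw [← show b i = v i by simp [b], b.equivFun_self, Pi.single_apply]
  exact if_congr eq_comm rfl rfl

theorem ex4Indep_of_forall_not_subset {a b c d : Fin 9}
    (h : ∀ C ∈ ex4Circuits, ¬C ⊆ {a, b, c, d}) :
    ex4Indep {a, b, c, d} :=
  ⟨ncard_le_four a b c d, h⟩

theorem not_ex4Indep_of_mem_ex4Circuits {C : Set (Fin 9)} (hC : C ∈ ex4Circuits) :
    ¬ex4Indep C :=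
  fun h => h.2 C hC subset_rfl

theorem ex4_minor_relations {k : Type*} [CommRing k] (x y z w : Fin 4 → k)
    (hy : y 3 = 0) (hw : w 2 = 0)
    (h0567 : y 1 * (z 2 * w 3 - z 3 * w 2) - y 2 * (z 1 * w 3 - z 3 * w 1)
      + y 3 * (z 1 * w 2 - z 2 * w 1) = 0)
    (h0247 : x 3 * w 1 - x 1 * w 3 = 0)
    (h2456 : x 0 * (y 1 * z 3 - y 3 * z 1) - x 1 * (y 0 * z 3 - y 3 * z 0)
      + x 3 * (y 0 * z 1 - y 1 * z 0) = 0)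
    (h1356 : y 2 * z 0 - y 0 * z 2 = 0) :
    x 0 * y 1 * y 2 * z 3 * w 3 = 0 := by
  -- After multiplying `h2456` by `y 2 * w 3` and eliminating with `h0247` and `h1356`, what is
  -- left is `x 3 * y 0` times `h0567`.
  rw [hy] at h0567 h2456
  rw [hw] at h0567
  linear_combination (y 2 * w 3) * h2456 - (y 0 * y 2 * z 3) * h0247
    + (x 3 * y 1 * w 3) * h1356 + (x 3 * y 0) * h0567

theorem det_eq_zero_of_mem_ex4Circuits {k : Type*} [Field k] {ψ : Fin 9 → Fin 4 → k}
    (hrep : ∀ X, ex4Indep X ↔ LinearIndepOn k ψ X) (a b c d : Fin 9)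
    (hinj : Injective ![a, b, c, d] := by decide)
    (hC : {a, b, c, d} ∈ ex4Circuits := by simp [ex4Circuits]) :
    (Matrix.of ![ψ a, ψ b, ψ c, ψ d]).det = 0 :=
  not_not.1 fun h => not_ex4Indep_of_mem_ex4Circuits hC <| (hrep _).2 <|
    (linearIndepOn_four_iff hinj ψ).2 ((linearIndependent_iff_det_ne_zero _).2 h)

theorem det_ne_zero_of_forall_not_subset {k : Type*} [Field k] {ψ : Fin 9 → Fin 4 → k}
    (hrep : ∀ X, ex4Indep X ↔ LinearIndepOn k ψ X) (a b c d : Fin 9)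
    (hinj : Injective ![a, b, c, d] := by decide)
    (h : ∀ C ∈ ex4Circuits, ¬C ⊆ {a, b, c, d} := by simp [ex4Circuits, insert_subset_iff]) :
    (Matrix.of ![ψ a, ψ b, ψ c, ψ d]).det ≠ 0 :=
  (linearIndependent_iff_det_ne_zero _).1 <|
    (linearIndepOn_four_iff hinj ψ).1 ((hrep _).1 (ex4Indep_of_forall_not_subset h))

section StandardCoordinates

variable {k : Type*} [Field k] (ψ : Fin 9 → Fin 4 → k)

theorem ex4_product_eq_zero_of_standard
    (h0 : ψ 0 = Pi.single 0 1) (h1 : ψ 1 = Pi.single 1 1) (h2 : ψ 2 = Pi.single 2 1)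
    (h3 : ψ 3 = Pi.single 3 1) (hrep : ∀ X, ex4Indep X ↔ LinearIndepOn k ψ X) :
    ψ 4 0 * ψ 5 1 * ψ 5 2 * ψ 6 3 * ψ 7 3 = 0 := by
  refine ex4_minor_relations (ψ 4) (ψ 5) (ψ 6) (ψ 7) ?_ ?_ ?_ ?_ ?_ ?_
  · simpa [Matrix.det_succ_row_zero, Fin.sum_univ_succ, Fin.succAbove, h0, h1, h2, h3,
      sub_eq_add_neg, add_assoc] using det_eq_zero_of_mem_ex4Circuits hrep 0 1 2 5
  · simpa [Matrix.det_succ_row_zero, Fin.sum_univ_succ, Fin.succAbove, h0, h1, h2, h3,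
      sub_eq_add_neg, add_assoc] using det_eq_zero_of_mem_ex4Circuits hrep 0 1 3 7
  · simpa [Matrix.det_succ_row_zero, Fin.sum_univ_succ, Fin.succAbove, h0, h1, h2, h3,
      sub_eq_add_neg, add_assoc] using det_eq_zero_of_mem_ex4Circuits hrep 0 5 6 7
  · simpa [Matrix.det_succ_row_zero, Fin.sum_univ_succ, Fin.succAbove, h0, h1, h2, h3,
      sub_eq_add_neg, add_assoc] using det_eq_zero_of_mem_ex4Circuits hrep 0 2 4 7
  · simpa [Matrix.det_succ_row_zero, Fin.sum_univ_succ, Fin.succAbove, h0, h1, h2, h3,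
      sub_eq_add_neg, add_assoc] using det_eq_zero_of_mem_ex4Circuits hrep 2 4 5 6
  · simpa [Matrix.det_succ_row_zero, Fin.sum_univ_succ, Fin.succAbove, h0, h1, h2, h3,
      sub_eq_add_neg, add_assoc] using det_eq_zero_of_mem_ex4Circuits hrep 1 3 5 6

theorem ex4_coords_ne_zero_of_standard
    (h0 : ψ 0 = Pi.single 0 1) (h1 : ψ 1 = Pi.single 1 1) (h2 : ψ 2 = Pi.single 2 1)
    (h3 : ψ 3 = Pi.single 3 1) (hrep : ∀ X, ex4Indep X ↔ LinearIndepOn k ψ X) :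
    ψ 4 0 ≠ 0 ∧ ψ 5 1 ≠ 0 ∧ ψ 5 2 ≠ 0 ∧ ψ 6 3 ≠ 0 ∧ ψ 7 3 ≠ 0 := by
  refine ⟨?_, ?_, ?_, ?_, ?_⟩
  · simpa [Matrix.det_succ_row_zero, Fin.sum_univ_succ, Fin.succAbove, h0, h1, h2, h3] using
      det_ne_zero_of_forall_not_subset hrep 1 2 3 4
  · simpa [Matrix.det_succ_row_zero, Fin.sum_univ_succ, Fin.succAbove, h0, h1, h2, h3] using
      det_ne_zero_of_forall_not_subset hrep 0 2 3 5
  · simpa [Matrix.det_succ_row_zero, Fin.sum_univ_succ, Fin.succAbove, h0, h1, h2, h3] using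
      det_ne_zero_of_forall_not_subset hrep 0 1 3 5
  · simpa [Matrix.det_succ_row_zero, Fin.sum_univ_succ, Fin.succAbove, h0, h1, h2, h3] using
      det_ne_zero_of_forall_not_subset hrep 0 1 2 6
  · simpa [Matrix.det_succ_row_zero, Fin.sum_univ_succ, Fin.succAbove, h0, h1, h2, h3] using
      det_ne_zero_of_forall_not_subset hrep 0 1 2 7

end StandardCoordinates

/-- The rank-4 matroid on 9 elements of Example 4 is not representable over any field. -/
theorem ex4_not_representable {k : Type*} [Field k] (φ : Fin 9 → (Fin 4 → k)) :
    ¬ (Function.Injective φ ∧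
        ∀ X : Set (Fin 9), ex4Indep X ↔ LinearIndependent k (fun x : X => φ x)) := by
  rintro ⟨-, hrep⟩
  have hbasis : LinearIndependent k ![φ 0, φ 1, φ 2, φ 3] :=
    (linearIndependent_iff_det_ne_zero _).2 (det_ne_zero_of_forall_not_subset hrep 0 1 2 3)
  obtain ⟨e, he⟩ := exists_linearEquiv_apply_eq_single hbasis
  have hrep' : ∀ X, ex4Indep X ↔ LinearIndepOn k (e ∘ φ) X := fun X =>
    (hrep X).trans (e.toLinearMap.linearIndepOn_iff_of_injOn e.injective.injOn).symm
  obtain ⟨h40, h51, h52, h63, h73⟩ :=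
    ex4_coords_ne_zero_of_standard _ (he 0) (he 1) (he 2) (he 3) hrep'
  exact mul_ne_zero (mul_ne_zero (mul_ne_zero (mul_ne_zero h40 h51) h52) h63) h73 <|
    ex4_product_eq_zero_of_standard _ (he 0) (he 1) (he 2) (he 3) hrep'
end
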